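/- Let Y be a real random variable with continuous, strictly increasing CDF F, and let F̂ : ℝ → [0,1] be any nondecreasing function with sup_y |F̂(y) - F(y)| ≤ ε. Then U = F̂(Y) satisfies sup_{u ∈ [0,1]} |P(U ≤ u) - u| ≤ 2ε. -/

import Mathlib

/-! The probability integral transform `F(Y)` of a random variable with continuous, strictly
increasing CDF `F` is exactly uniform: `{F(Y) ≤ t} = {Y ≤ F⁻¹ t}`. Since `|F̂ - F| ≤ ε`, the event
`{F̂(Y) ≤ u}` is sandwiched between `{F(Y) ≤ u - ε}` and `{F(Y) ≤ u + ε}`, whose probabilities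
are within `ε` of `u`. -/

open MeasureTheory ProbabilityTheory Filter Set

namespace ProbabilityTheory

lemma cdf_pos_of_strictMono {ν : Measure ℝ} (hm : StrictMono (cdf ν)) (y : ℝ) : 0 < cdf ν y :=
  (cdf_nonneg ν (y - 1)).trans_lt (hm (sub_one_lt y))

lemma exists_cdf_eq_of_continuous {ν : Measure ℝ} (hc : Continuous (cdf ν)) {t : ℝ}
    (ht : t ∈ Ioo 0 1) : ∃ y, cdf ν y = t := by
  obtain ⟨a, ha⟩ := ((tendsto_cdf_atBot ν).eventually_lt_const ht.1).exists
  obtain ⟨b, hb⟩ := ((tendsto_cdf_atTop ν).eventually_const_lt ht.2).exists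
  exact intermediate_value_univ a b hc ⟨ha.le, hb.le⟩

/-- `t ↦ max 0 (min t 1)` is the CDF of the uniform distribution on `[0, 1]`. -/
lemma measureReal_cdf_le {ν : Measure ℝ} [IsProbabilityMeasure ν] (hc : Continuous (cdf ν))
    (hm : StrictMono (cdf ν)) (t : ℝ) :
    ν.real {y | cdf ν y ≤ t} = max 0 (min t 1) := by
  rcases le_or_gt t 0 with ht0 | ht0
  · have hempty : {y | cdf ν y ≤ t} = ∅ :=
      eq_empty_of_forall_notMem fun y (hy : cdf ν y ≤ t) =>
        (cdf_pos_of_strictMono hm y).not_ge (hy.trans ht0)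
    rw [hempty, measureReal_empty, min_eq_left (by linarith), max_eq_left ht0]
  rcases le_or_gt 1 t with ht1 | ht1
  · have huniv : {y | cdf ν y ≤ t} = univ :=
      eq_univ_of_forall fun y => (cdf_le_one ν y).trans ht1
    rw [huniv, probReal_univ, min_eq_right ht1, max_eq_right zero_le_one]
  obtain ⟨y, rfl⟩ := exists_cdf_eq_of_continuous hc ⟨ht0, ht1⟩
  have hIic : {x | cdf ν x ≤ cdf ν y} = Iic y := ext fun x => hm.le_iff_le
  rw [hIic, ← cdf_eq_real, min_eq_left ht1.le, max_eq_right ht0.le]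

lemma measureReal_cdf_map_comp_le {Ω : Type*} [MeasurableSpace Ω] {μ : Measure Ω}
    [IsProbabilityMeasure μ] {Y : Ω → ℝ} (hY : Measurable Y)
    (hc : Continuous (cdf (μ.map Y))) (hm : StrictMono (cdf (μ.map Y))) (t : ℝ) :
    μ.real {ω | cdf (μ.map Y) (Y ω) ≤ t} = max 0 (min t 1) := by
  have : IsProbabilityMeasure (μ.map Y) := Measure.isProbabilityMeasure_map hY.aemeasurable
  rw [← measureReal_cdf_le hc hm t, map_measureReal_apply hY (measurableSet_le hc.measurable
    measurable_const)]
  rfl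

end ProbabilityTheory

lemma abs_measureReal_le_sub_le_of_abs_sub_le {Ω : Type*} [MeasurableSpace Ω] {μ : Measure Ω}
    [IsFiniteMeasure μ] {X Z : Ω → ℝ} {ε : ℝ}
    (hZ : ∀ t, μ.real {ω | Z ω ≤ t} = max 0 (min t 1)) (hε : 0 ≤ ε)
    (hXZ : ∀ ω, |X ω - Z ω| ≤ ε) {u : ℝ} (hu : u ∈ Icc 0 1) :
    |μ.real {ω | X ω ≤ u} - u| ≤ ε := by
  have hlower : u - ε ≤ μ.real {ω | X ω ≤ u} :=
    calc u - ε ≤ max 0 (min (u - ε) 1) := le_max_of_le_right (le_min le_rfl (by linarith [hu.2]))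
      _ = μ.real {ω | Z ω ≤ u - ε} := (hZ _).symm
      _ ≤ μ.real {ω | X ω ≤ u} :=
          measureReal_mono fun ω (hω : Z ω ≤ u - ε) =>
            show X ω ≤ u by linarith [(abs_le.mp (hXZ ω)).2]
  have hupper : μ.real {ω | X ω ≤ u} ≤ u + ε :=
    calc μ.real {ω | X ω ≤ u} ≤ μ.real {ω | Z ω ≤ u + ε} :=
          measureReal_mono fun ω (hω : X ω ≤ u) =>
            show Z ω ≤ u + ε by linarith [(abs_le.mp (hXZ ω)).1]
      _ = max 0 (min (u + ε) 1) := hZ _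
      _ ≤ u + ε := max_le (by linarith [hu.1]) (min_le_left _ _)
  exact abs_sub_le_iff.mpr ⟨by linarith, by linarith⟩

theorem pit_kolmogorov_distance_le_of_cdf_error_general
    {Ω : Type*} [MeasurableSpace Ω] (μ : Measure Ω) [IsProbabilityMeasure μ]
    (Y : Ω → ℝ) (hY : Measurable Y) (F : ℝ → ℝ)
    (hFdef : ∀ y, F y = (μ {ω | Y ω ≤ y}).toReal)
    (hFc : Continuous F) (hFm : StrictMono F)
    (Fhat : ℝ → ℝ)
    (ε : ℝ) (happrox : ∀ y, |Fhat y - F y| ≤ ε) :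
    ∀ u ∈ Set.Icc (0 : ℝ) 1, |(μ {ω | Fhat (Y ω) ≤ u}).toReal - u| ≤ 2 * ε := by
  have : IsProbabilityMeasure (μ.map Y) := Measure.isProbabilityMeasure_map hY.aemeasurable
  have hF : F = cdf (μ.map Y) := funext fun y => by
    rw [hFdef, cdf_eq_real, map_measureReal_apply hY measurableSet_Iic]
    rfl
  subst hF
  have hε : 0 ≤ ε := (abs_nonneg _).trans (happrox 0)
  intro u hu
  calc |μ.real {ω | Fhat (Y ω) ≤ u} - u| ≤ ε :=
        abs_measureReal_le_sub_le_of_abs_sub_le (measureReal_cdf_map_comp_le hY hFc hFm) hε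
          (fun ω => happrox (Y ω)) hu
    _ ≤ 2 * ε := by linarith

/-- If `Y` has continuous strictly increasing CDF `F` and `F̂ : ℝ → [0,1]` is
nondecreasing with `sup_y |F̂ y - F y| ≤ ε`, then the estimated PIT value `U = F̂(Y)`
has Kolmogorov distance to uniform at most `2ε`. -/
theorem pit_kolmogorov_distance_le_of_cdf_error
    {Ω : Type*} [MeasurableSpace Ω] (μ : Measure Ω) [IsProbabilityMeasure μ]
    (Y : Ω → ℝ) (hY : Measurable Y) (F : ℝ → ℝ)
    (hFdef : ∀ y, F y = (μ {ω | Y ω ≤ y}).toReal)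
    (hFc : Continuous F) (hFm : StrictMono F)
    (Fhat : ℝ → ℝ) (hmono : Monotone Fhat) (hrange : ∀ y, Fhat y ∈ Set.Icc (0 : ℝ) 1)
    (ε : ℝ) (happrox : ∀ y, |Fhat y - F y| ≤ ε) :
    ∀ u ∈ Set.Icc (0 : ℝ) 1, |(μ {ω | Fhat (Y ω) ≤ u}).toReal - u| ≤ 2 * ε :=
  pit_kolmogorov_distance_le_of_cdf_error_general μ Y hY F hFdef hFc hFm Fhat ε happrox
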